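/- Let f : F_2^m → F_2^m be a permutation with f(0) = 0 such that n̂(f) = 0. Then f has no partially bent components: for every nonzero v ∈ F_2^m, the component ⟨f, v⟩ is not partially bent. In particular no component of f has algebraic degree at most 2. -/
import Mathlib


/-- `F_2^m` as the space of binary vectors of length `m`. -/
abbrev BV (m : ℕ) := Fin m → ZMod 2

/-- The derivative of `f` in direction `a` : `f̂_a(x) = f(x+a) + f(x)`. -/
def der {m : ℕ} (f : BV m → BV m) (a : BV m) : BV m → BV m := fun x => f (x + a) + f x

/-- Standard dot product over `F_2`; `⟨g, v⟩ = fun x => dotp v (g x)` is the `v`-component. -/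
def dotp {m : ℕ} (v w : BV m) : ZMod 2 := ∑ i, v i * w i

/-- `n̂(f)`: the maximum over nonzero `a` of the number of nonzero `v` such that the
component `⟨f̂_a, v⟩` is a constant function. -/
noncomputable def nhat {m : ℕ} (f : BV m → BV m) : ℕ :=
  Finset.sup (Finset.univ.filter fun a : BV m => a ≠ 0) fun a =>
    Nat.card {v : BV m // v ≠ 0 ∧ ∃ c, ∀ x, dotp v (der f a x) = c}

/-- Algebraic degree of a Boolean function, via its algebraic normal form: the degree is the
maximal size of a monomial `∏_{i ∈ S} x_i` appearing with nonzero (Möbius) coefficient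
`∑_{x : supp x ⊆ S} g x` in the unique reduced multilinear polynomial representing `g`. -/
def algDeg {m : ℕ} (g : BV m → ZMod 2) : ℕ :=
  Finset.sup (Finset.univ.filter fun S : Finset (Fin m) =>
    (∑ x ∈ Finset.univ.filter (fun x : BV m => ∀ i, x i ≠ 0 → i ∈ S), g x) ≠ 0)
    Finset.card

/-- A Boolean function `S` is partially bent: there are subspaces `U, V` with
`F_2^m = U ⊕ V` such that the restriction of `S` to `V` is affine, the restriction of `S`
to `U` is bent (every nonzero derivative in a direction from `U` is balanced on `U`), and
`S(y+z) = S(y) + S(z) + S(0)` for all `y ∈ U`, `z ∈ V`. -/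
def PartiallyBent {m : ℕ} (S : BV m → ZMod 2) : Prop :=
  ∃ U V : Submodule (ZMod 2) (BV m),
    U ⊓ V = ⊥ ∧ U ⊔ V = ⊤ ∧
    (∃ (L : BV m →ₗ[ZMod 2] ZMod 2) (c : ZMod 2), ∀ z ∈ V, S z = L z + c) ∧
    (∀ a ∈ U, a ≠ 0 → ∀ b : ZMod 2,
      2 * Nat.card {x : BV m // x ∈ U ∧ S ((x : BV m) + a) + S x = b} = Nat.card U) ∧
    (∀ y ∈ U, ∀ z ∈ V, S (y + z) = S y + S z + S 0)


def chi (a : ZMod 2) : ℤ := if a = 0 then 1 else -1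

lemma chi_add (a b : ZMod 2) : chi (a + b) = chi a * chi b := by revert a b; decide

lemma chi_add_one (a : ZMod 2) : chi (a + 1) = - chi a := by revert a; decide

lemma dotp_add_right {m : ℕ} (v w u : BV m) : dotp v (w + u) = dotp v w + dotp v u := by
  simp [dotp, mul_add, Finset.sum_add_distrib]

lemma sum_chi_eq_zero {m : ℕ} (g : BV m → ZMod 2) (x₀ : BV m)
    (h : ∀ x, g (x + x₀) = g x + 1) : ∑ x : BV m, chi (g x) = 0 := by
  have h1 : ∑ x : BV m, chi (g (x + x₀)) = ∑ x : BV m, chi (g x) :=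
    Fintype.sum_equiv (Equiv.addRight x₀) _ _ (fun x => rfl)
  have h2 : ∑ x : BV m, chi (g (x + x₀)) = - ∑ x : BV m, chi (g x) := by
    rw [← Finset.sum_neg_distrib]
    exact Finset.sum_congr rfl fun x _ => by rw [h x, chi_add_one]
  omega

lemma key {m : ℕ} (S : BV m → ZMod 2) (hbal : ∑ x : BV m, chi (S x) = 0)
    (hder : ∀ a : BV m, a ≠ 0 → ∑ x : BV m, chi (S (x + a) + S x) = 0) : False := by
  have h2 : (∑ x : BV m, chi (S x)) * (∑ y : BV m, chi (S y))
      = ∑ x : BV m, ∑ a : BV m, chi (S (x + a) + S x) := by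
    rw [Finset.sum_mul_sum]
    refine Finset.sum_congr rfl fun x _ => ?_
    have h1 : ∑ a : BV m, chi (S (x + a)) = ∑ y : BV m, chi (S y) :=
      Fintype.sum_equiv (Equiv.addLeft x) _ _ (fun a => rfl)
    rw [← Finset.mul_sum, ← h1, Finset.mul_sum]
    exact Finset.sum_congr rfl fun a _ => by rw [← chi_add, add_comm]
  rw [hbal, zero_mul, Finset.sum_comm] at h2
  have h3 : ∑ a : BV m, ∑ x : BV m, chi (S (x + a) + S x)
      = ∑ x : BV m, chi (S (x + 0) + S x) := by
    refine Finset.sum_eq_single 0 (fun a _ ha => hder a ha) (fun h => absurd (Finset.mem_univ _) h)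
  rw [h3] at h2
  have h4 : ∀ x : BV m, chi (S (x + 0) + S x) = 1 := by
    intro x; rw [add_zero, CharTwo.add_self_eq_zero]; rfl
  simp only [h4, Finset.sum_const, Finset.card_univ, nsmul_eq_mul, mul_one] at h2
  have := Fintype.card_pos (α := BV m)
  omega

lemma comp_balanced {m : ℕ} (f : BV m → BV m) (hf : Function.Bijective f) (v : BV m)
    (hv : v ≠ 0) : ∑ x : BV m, chi (dotp v (f x)) = 0 := by
  have h1 : ∑ x : BV m, chi (dotp v (f x)) = ∑ y : BV m, chi (dotp v y) :=
    Fintype.sum_bijective f hf _ _ (fun x => rfl)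
  rw [h1]
  obtain ⟨i, hi⟩ : ∃ i, v i ≠ 0 := by
    by_contra hc; push_neg at hc; exact hv (funext hc)
  have hvi : v i = 1 := by revert hi; generalize v i = t; revert t; decide
  apply sum_chi_eq_zero (fun y => dotp v y) (Pi.single i 1)
  intro x
  have hs : dotp v (Pi.single i 1) = 1 := by
    rw [dotp, Finset.sum_eq_single i (fun j _ hj => by simp [Pi.single_eq_of_ne hj])
      (fun h => absurd (Finset.mem_univ _) h), Pi.single_eq_same, hvi, mul_one]
  show dotp v (x + Pi.single i 1) = dotp v x + 1
  rw [dotp_add_right, hs]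

lemma hnon_of {m : ℕ} (f : BV m → BV m) (h : nhat f = 0) :
    ∀ a : BV m, a ≠ 0 → ∀ v : BV m, v ≠ 0 → ¬ (∃ c, ∀ x, dotp v (der f a x) = c) := by
  intro a ha v hv hex
  have hle : Nat.card {v : BV m // v ≠ 0 ∧ ∃ c, ∀ x, dotp v (der f a x) = c} ≤ nhat f := by
    unfold nhat
    exact Finset.le_sup
      (f := fun a : BV m => Nat.card {v : BV m // v ≠ 0 ∧ ∃ c, ∀ x, dotp v (der f a x) = c})
      (Finset.mem_filter.mpr ⟨Finset.mem_univ a, ha⟩)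
  rw [h, Nat.le_zero] at hle
  have hne : Nat.card {v : BV m // v ≠ 0 ∧ ∃ c, ∀ x, dotp v (der f a x) = c} ≠ 0 :=
    Nat.card_ne_zero.mpr ⟨⟨v, hv, hex⟩, inferInstance⟩
  exact hne hle

lemma anf {m : ℕ} (g : BV m → ZMod 2) (x : BV m) :
    g x = ∑ T : Finset (Fin m),
      (∑ y ∈ Finset.univ.filter (fun y : BV m => ∀ i, y i ≠ 0 → i ∈ T), g y) * ∏ i ∈ T, x i := by
  have step1 : ∀ y : BV m,
      (∑ T : Finset (Fin m), if (∀ i, y i ≠ 0 → i ∈ T) then ∏ i ∈ T, x i else 0)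
      = if y = x then 1 else 0 := by
    intro y
    have hterm : ∀ T : Finset (Fin m),
        (if (∀ i, y i ≠ 0 → i ∈ T) then ∏ i ∈ T, x i else 0)
        = (∏ i ∈ T, x i) * ∏ i ∈ Finset.univ \ T, (1 + y i) := by
      intro T
      by_cases hc : ∀ i, y i ≠ 0 → i ∈ T
      · rw [if_pos hc]
        have h1 : ∏ i ∈ Finset.univ \ T, (1 + y i) = 1 := by
          apply Finset.prod_eq_one
          intro i hi
          have hy : y i = 0 := by
            by_contra hne; exact (Finset.mem_sdiff.mp hi).2 (hc i hne)
          rw [hy, add_zero]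
        rw [h1, mul_one]
      · rw [if_neg hc]
        push_neg at hc
        obtain ⟨i, hyi, hiT⟩ := hc
        have h0 : (1 : ZMod 2) + y i = 0 := by
          revert hyi; generalize y i = t; revert t; decide
        rw [Finset.prod_eq_zero (Finset.mem_sdiff.mpr ⟨Finset.mem_univ i, hiT⟩) h0, mul_zero]
    simp only [hterm]
    rw [← Finset.powerset_univ, ← Finset.prod_add]
    by_cases hyx : y = x
    · subst hyx; rw [if_pos rfl]
      apply Finset.prod_eq_one
      intro i _
      have : ∀ t : ZMod 2, t + (1 + t) = 1 := by decide
      exact this _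
    · rw [if_neg hyx]
      obtain ⟨i, hi⟩ : ∃ i, y i ≠ x i := by
        by_contra hc; push_neg at hc; exact hyx (funext hc)
      apply Finset.prod_eq_zero (Finset.mem_univ i)
      revert hi; generalize y i = t; generalize x i = s; revert s t; decide
  have main : ∑ T : Finset (Fin m),
      (∑ y ∈ Finset.univ.filter (fun y : BV m => ∀ i, y i ≠ 0 → i ∈ T), g y) * ∏ i ∈ T, x i
      = ∑ y : BV m, g y * (if y = x then 1 else 0) := by
    simp only [Finset.sum_mul, Finset.sum_filter]
    rw [Finset.sum_comm]
    refine Finset.sum_congr rfl fun y _ => ?_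
    rw [← step1 y, Finset.mul_sum]
    exact Finset.sum_congr rfl fun T _ => by rw [mul_ite, mul_zero, ite_mul, zero_mul]
  rw [main]
  simp [Finset.sum_ite_eq' Finset.univ x (fun y => g y)]

lemma trip {m : ℕ} (g : BV m → ZMod 2)
    (hdeg : ∀ T : Finset (Fin m), 2 < T.card →
      (∑ y ∈ Finset.univ.filter (fun y : BV m => ∀ i, y i ≠ 0 → i ∈ T), g y) = 0)
    (x a b c : BV m) :
    g (x+a+b+c) + g (x+a+b) + g (x+a+c) + g (x+b+c) + g (x+a) + g (x+b) + g (x+c) + g x = 0 := by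
  rw [anf g (x+a+b+c), anf g (x+a+b), anf g (x+a+c), anf g (x+b+c), anf g (x+a), anf g (x+b),
    anf g (x+c), anf g x]
  simp only [← Finset.sum_add_distrib]
  apply Finset.sum_eq_zero
  intro T _
  by_cases hT : 2 < T.card
  · simp [hdeg T hT]
  · push_neg at hT
    obtain h0 | h1 | h2 : T.card = 0 ∨ T.card = 1 ∨ T.card = 2 := by omega
    · rw [Finset.card_eq_zero.mp h0]
      simp only [Finset.prod_empty, mul_one]
      generalize (∑ y ∈ Finset.univ.filter
        (fun y : BV m => ∀ i, y i ≠ 0 → i ∈ (∅ : Finset (Fin m))), g y) = t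
      revert t; decide
    · obtain ⟨i, rfl⟩ := Finset.card_eq_one.mp h1
      simp only [Finset.prod_singleton, Pi.add_apply]
      generalize (∑ y ∈ Finset.univ.filter
        (fun y : BV m => ∀ k, y k ≠ 0 → k ∈ ({i} : Finset (Fin m))), g y) = t
      generalize x i = p
      generalize a i = q
      generalize b i = r
      generalize c i = s
      revert t p q r s; decide
    · obtain ⟨i, j, hij, rfl⟩ := Finset.card_eq_two.mp h2
      simp only [Finset.prod_pair hij, Pi.add_apply]
      generalize (∑ y ∈ Finset.univ.filter
        (fun y : BV m => ∀ k, y k ≠ 0 → k ∈ ({i, j} : Finset (Fin m))), g y) = t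
      generalize x i = p
      generalize a i = q
      generalize b i = r
      generalize c i = s
      generalize x j = p'
      generalize a j = q'
      generalize b j = r'
      generalize c j = s'
      revert t p q r s p' q' r' s'; decide

lemma dotp_zero_right {m : ℕ} (v : BV m) : dotp v 0 = 0 := by simp [dotp]

/-- A permutation `f` of `F_2^m` with `f(0) = 0` and `n̂(f) = 0` has no partially bent
components; in particular no component of `f` has algebraic degree at most 2. -/
theorem stmt_17 (m : ℕ) (f : BV m → BV m) (hperm : Function.Bijective f) (hf0 : f 0 = 0)
    (h : nhat f = 0) :
    (∀ v : BV m, v ≠ 0 → ¬ PartiallyBent (fun x => dotp v (f x)))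
    ∧ (∀ v : BV m, v ≠ 0 → ¬ algDeg (fun x => dotp v (f x)) ≤ 2) := by
  constructor
  · rintro v hv ⟨U, V, hUV, hsup, ⟨L, c, hL⟩, hbent, hadd⟩
    by_cases hV : V = ⊥
    · subst hV
      rw [sup_bot_eq] at hsup
      subst hsup
      refine key (fun x => dotp v (f x)) (comp_balanced f hperm v hv) ?_
      intro a ha
      show ∑ x : BV m, chi (dotp v (f (x + a)) + dotp v (f x)) = 0
      have hb : ∀ b : ZMod 2,
          2 * Nat.card {x : BV m // x ∈ (⊤ : Submodule (ZMod 2) (BV m)) ∧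
            dotp v (f (x + a)) + dotp v (f x) = b}
          = Nat.card (⊤ : Submodule (ZMod 2) (BV m)) := fun b => hbent a trivial ha b
      have conv : ∀ b : ZMod 2,
          Nat.card {x : BV m // x ∈ (⊤ : Submodule (ZMod 2) (BV m)) ∧
            dotp v (f (x + a)) + dotp v (f x) = b}
          = (Finset.univ.filter fun x : BV m => dotp v (f (x + a)) + dotp v (f x) = b).card := by
        intro b
        rw [Nat.card_congr (Equiv.subtypeEquivRight
          (fun x => by simp [Submodule.mem_top] : ∀ x : BV m,
            (x ∈ (⊤ : Submodule (ZMod 2) (BV m)) ∧ dotp v (f (x + a)) + dotp v (f x) = b)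
            ↔ dotp v (f (x + a)) + dotp v (f x) = b))]
        rw [Nat.card_eq_fintype_card, Fintype.card_subtype]
      have h0 := hb 0
      have h1 := hb 1
      rw [conv 0] at h0
      rw [conv 1] at h1
      have hfil : Finset.univ.filter (fun x : BV m => ¬ (dotp v (f (x + a)) + dotp v (f x) = 0))
          = Finset.univ.filter (fun x : BV m => dotp v (f (x + a)) + dotp v (f x) = 1) := by
        apply Finset.filter_congr
        intro x _
        generalize dotp v (f (x + a)) + dotp v (f x) = t
        revert t; decide
      have hsum : ∑ x : BV m, chi (dotp v (f (x + a)) + dotp v (f x))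
          = ((Finset.univ.filter fun x : BV m => dotp v (f (x + a)) + dotp v (f x) = 0).card : ℤ)
            - ((Finset.univ.filter fun x : BV m =>
                dotp v (f (x + a)) + dotp v (f x) = 1).card : ℤ) := by
        rw [← Finset.sum_filter_add_sum_filter_not Finset.univ
          (fun x : BV m => dotp v (f (x + a)) + dotp v (f x) = 0), hfil]
        have e0 : ∑ x ∈ Finset.univ.filter
            (fun x : BV m => dotp v (f (x + a)) + dotp v (f x) = 0),
            chi (dotp v (f (x + a)) + dotp v (f x))
            = ∑ _x ∈ Finset.univ.filter
            (fun x : BV m => dotp v (f (x + a)) + dotp v (f x) = 0), (1 : ℤ) :=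
          Finset.sum_congr rfl fun x hx => by
            rw [(Finset.mem_filter.mp hx).2]; simp [chi]
        have e1 : ∑ x ∈ Finset.univ.filter
            (fun x : BV m => dotp v (f (x + a)) + dotp v (f x) = 1),
            chi (dotp v (f (x + a)) + dotp v (f x))
            = ∑ _x ∈ Finset.univ.filter
            (fun x : BV m => dotp v (f (x + a)) + dotp v (f x) = 1), (-1 : ℤ) :=
          Finset.sum_congr rfl fun x hx => by
            rw [(Finset.mem_filter.mp hx).2]; simp [chi]
        rw [e0, e1]
        simp [Finset.sum_const]
        ring
      rw [hsum]
      omega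
    · obtain ⟨a, haV, ha⟩ := Submodule.exists_mem_ne_zero_of_ne_bot hV
      have hadd' : ∀ y ∈ U, ∀ z ∈ V, dotp v (f (y + z))
          = dotp v (f y) + dotp v (f z) + dotp v (f 0) := hadd
      have hL' : ∀ z ∈ V, dotp v (f z) = L z + c := hL
      refine hnon_of f h a ha v hv ⟨L a, fun x => ?_⟩
      have hx : x ∈ U ⊔ V := by rw [hsup]; trivial
      obtain ⟨y, hy, z, hz, rfl⟩ := Submodule.mem_sup.mp hx
      have e1 : dotp v (der f a (y + z))
          = dotp v (f (y + (z + a))) + dotp v (f (y + z)) := by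
        rw [der, dotp_add_right, add_assoc]
      rw [e1, hadd' y hy (z + a) (add_mem hz haV), hadd' y hy z hz,
        hL' (z + a) (add_mem hz haV), hL' z hz, map_add, hf0, dotp_zero_right]
      generalize dotp v (f y) = A
      generalize L z = B
      generalize L a = C
      clear hL hL'
      revert A B C c
      decide
  · intro v hv hdeg
    have hc3 : ∀ T : Finset (Fin m), 2 < T.card →
        (∑ y ∈ Finset.univ.filter (fun y : BV m => ∀ i, y i ≠ 0 → i ∈ T), dotp v (f y)) = 0 := by
      intro T hT
      by_contra hne
      have hle : T.card ≤ algDeg (fun x => dotp v (f x)) := by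
        unfold algDeg
        exact Finset.le_sup (f := Finset.card)
          (Finset.mem_filter.mpr ⟨Finset.mem_univ _, hne⟩)
      omega
    have htrip := trip (fun x => dotp v (f x)) hc3
    refine key (fun x => dotp v (f x)) (comp_balanced f hperm v hv) ?_
    intro a ha
    have hnc := hnon_of f h a ha v hv
    push_neg at hnc
    obtain ⟨x₀, hx₀⟩ := hnc (dotp v (der f a 0))
    have hx₀' : dotp v (f (x₀ + a)) + dotp v (f x₀) ≠ dotp v (f a) + dotp v (f 0) := by
      simpa [der, dotp_add_right] using hx₀
    apply sum_chi_eq_zero (fun x => dotp v (f (x + a)) + dotp v (f x)) x₀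
    intro x
    have t := htrip 0 x x₀ a
    simp only [zero_add] at t
    show dotp v (f (x + x₀ + a)) + dotp v (f (x + x₀))
        = dotp v (f (x + a)) + dotp v (f x) + 1
    revert t hx₀'
    generalize dotp v (f (x + x₀ + a)) = A
    generalize dotp v (f (x + x₀)) = B
    generalize dotp v (f (x + a)) = C
    generalize dotp v (f (x₀ + a)) = E
    generalize dotp v (f x) = D
    generalize dotp v (f x₀) = F
    generalize dotp v (f a) = G
    generalize dotp v (f 0) = H
    revert A B C D E F G H
    decide
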